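/- Let p > 3 be a prime and let S = ∑_{x ∈ F_p} ((x^4 + 8x^3 + 24x^2 - 44x + 16)/p), where (·/p) denotes the Legendre symbol. If p = 19 then S = p - 1. If p ≠ 19 then S = -1 + ∑_{x ∈ F_p} ((x^3 - 608x + 5776)/p). -/

import Mathlib

/-!
Count the points of `v² = x⁴ + c x + d` over `𝔽_q` in two ways. Summing over `x` gives
`q + ∑ χ(x⁴ + c x + d)`.
Writing `v = w + x²` turns the curve into `2w x² - c x + (w² - d) = 0`, a quadratic in `x` for each
fixed `w ≠ 0` with `1 + χ(c² - 8w³ + 8dw)` roots, and a linear equation with one root for `w = 0`;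
the substitution `u = -2w` turns the discriminant into the cubic `u³ - 4du + c²`. The given quartic
is `(x + 2)⁴ - 76 (x + 2) + 152`, and `c = -76` vanishes in `𝔽_p` only for `p = 19`, which is
checked by direct computation.
-/

open Finset

section FiniteField

variable {F : Type*} [Field F] [Fintype F] [DecidableEq F]

lemma card_filter_sq_eq (hF : ringChar F ≠ 2) (a : F) :
    (#{v : F | v ^ 2 = a} : ℤ) = quadraticChar F a + 1 := by
  rw [← quadraticChar_card_sqrts hF a, Set.toFinset_ofPred]

lemma card_filter_quadratic_eq_zero (hF : ringChar F ≠ 2) {a : F} (ha : a ≠ 0) (b e : F) :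
    (#{t : F | a * (t * t) + b * t + e = 0} : ℤ) = quadraticChar F (discrim a b e) + 1 := by
  have : NeZero (2 : F) := ⟨Ring.two_ne_zero hF⟩
  have h2a : 2 * a ≠ 0 := mul_ne_zero two_ne_zero ha
  rw [← card_filter_sq_eq hF]
  simp_rw [quadratic_eq_zero_iff_discrim_eq_sq ha, eq_comm (a := discrim a b e)]
  exact_mod_cast card_bij' (fun t _ ↦ 2 * a * t + b) (fun s _ ↦ (s - b) / (2 * a))
    (by simp) (by simp [mul_div_cancel₀ _ h2a]) (by field_simp; simp) (by field_simp; simp)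

lemma sum_card_filter_comm {α β : Type*} [Fintype α] [Fintype β] (r : α → β → Prop)
    [∀ a b, Decidable (r a b)] :
    ∑ a, #{b | r a b} = ∑ b, #{a | r a b} := by
  simp only [card_filter]
  exact sum_comm

theorem sum_quadraticChar_quartic (hF : ringChar F ≠ 2) {c : F} (hc : c ≠ 0) (d : F) :
    ∑ x : F, quadraticChar F (x ^ 4 + c * x + d) =
      -1 + ∑ u : F, quadraticChar F (u ^ 3 - 4 * d * u + c ^ 2) := by
  have hfiber (x : F) : #{v : F | v ^ 2 = x ^ 4 + c * x + d} =
      #{w : F | 2 * w * (x * x) + -c * x + (w ^ 2 - d) = 0} :=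
    card_equiv (Equiv.subRight (x ^ 2)) fun v ↦ by
      simp only [mem_filter_univ, Equiv.subRight_apply]
      constructor <;> intro h <;> linear_combination h
  have hroots (w : F) : (#{x : F | 2 * w * (x * x) + -c * x + (w ^ 2 - d) = 0} : ℤ) =
      quadraticChar F (discrim (2 * w) (-c) (w ^ 2 - d)) + 1 - if w = 0 then 1 else 0 := by
    rcases eq_or_ne w 0 with rfl | hw
    · have hroot :
          ({x : F | 2 * 0 * (x * x) + -c * x + (0 ^ 2 - d) = 0} : Finset F) = {-d / c} := by
        ext x
        simp only [mem_filter_univ, mem_singleton, eq_div_iff hc]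
        constructor <;> intro h <;> linear_combination -h
      rw [hroot, show discrim (2 * 0 : F) (-c) (0 ^ 2 - d) = c ^ 2 by simp [discrim],
        quadraticChar_sq_one' hc]
      simp
    · rw [card_filter_quadratic_eq_zero hF (mul_ne_zero (Ring.two_ne_zero hF) hw), if_neg hw,
        sub_zero]
  have hdiscrim : ∑ w : F, quadraticChar F (discrim (2 * w) (-c) (w ^ 2 - d)) =
      ∑ u : F, quadraticChar F (u ^ 3 - 4 * d * u + c ^ 2) := by
    refine Fintype.sum_equiv (Equiv.mulLeft₀ (-2) (neg_ne_zero.mpr (Ring.two_ne_zero hF))) _ _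
      fun w ↦ ?_
    simp only [Equiv.mulLeft₀_apply, discrim]
    ring_nf
  have hdoubleCount := congrArg (Nat.cast (R := ℤ)) (sum_card_filter_comm
    fun x w : F ↦ 2 * w * (x * x) + -c * x + (w ^ 2 - d) = 0)
  simp only [← hfiber, Nat.cast_sum, card_filter_sq_eq hF, hroots] at hdoubleCount
  simp only [sum_add_distrib, sum_sub_distrib, sum_ite_eq', mem_univ, if_true, sum_const,
    card_univ, nsmul_eq_mul, mul_one, hdiscrim] at hdoubleCount
  linarith

end FiniteField

lemma sum_comp_quartic_shift {R M : Type*} [CommRing R] [Fintype R] [AddCommMonoid M]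
    (f : R → M) :
    ∑ x : R, f (x ^ 4 + 8 * x ^ 3 + 24 * x ^ 2 - 44 * x + 16) =
      ∑ x : R, f (x ^ 4 + -76 * x + 152) :=
  Fintype.sum_equiv (Equiv.addRight 2) _ _ fun x ↦ by
    rw [Equiv.coe_addRight]
    ring_nf

lemma zmod_seventysix_ne_zero {p : ℕ} [Fact p.Prime] (hp2 : p ≠ 2) (hp19 : p ≠ 19) :
    (76 : ZMod p) ≠ 0 := by
  have hp : p.Prime := Fact.out
  rw [show (76 : ZMod p) = ((2 ^ 2 * 19 : ℕ) : ZMod p) by norm_num, Ne,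
    ZMod.natCast_eq_zero_iff, hp.dvd_mul]
  rintro (h2 | h19)
  · exact hp2 ((Nat.prime_dvd_prime_iff_eq hp Nat.prime_two).mp (hp.dvd_of_dvd_pow h2))
  · exact hp19 ((Nat.prime_dvd_prime_iff_eq hp (by norm_num)).mp h19)

instance fact_prime_nineteen : Fact (Nat.Prime 19) := ⟨by norm_num⟩

lemma sum_quadraticChar_quartic_zmod_nineteen :
    ∑ x : ZMod 19, quadraticChar (ZMod 19) (x ^ 4 + 8 * x ^ 3 + 24 * x ^ 2 - 44 * x + 16) = 18 := by
  decide

theorem quartic_example_evaluation (p : ℕ) [Fact p.Prime] (hp : 3 < p) :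
    (p = 19 →
      ∑ x : ZMod p, quadraticChar (ZMod p)
          (x ^ 4 + 8 * x ^ 3 + 24 * x ^ 2 - 44 * x + 16) = (p : ℤ) - 1) ∧
    (p ≠ 19 →
      ∑ x : ZMod p, quadraticChar (ZMod p)
          (x ^ 4 + 8 * x ^ 3 + 24 * x ^ 2 - 44 * x + 16) =
        -1 + ∑ x : ZMod p, quadraticChar (ZMod p) (x ^ 3 - 608 * x + 5776)) := by
  constructor
  · rintro rfl
    exact sum_quadraticChar_quartic_zmod_nineteen
  · intro hp19
    have hchar : ringChar (ZMod p) ≠ 2 := by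
      rw [ZMod.ringChar_zmod_n]
      omega
    rw [sum_comp_quartic_shift,
      sum_quadraticChar_quartic hchar (neg_ne_zero.mpr (zmod_seventysix_ne_zero (by omega) hp19))]
    norm_num
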